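/- In a triangulated category, a small coproduct of distinguished triangles is a distinguished triangle: if (a_λ → b_λ → c_λ → a_λ[1]) is a family of distinguished triangles and the coproducts ⊕a_λ, ⊕b_λ, ⊕c_λ exist, then (⊕a_λ → ⊕b_λ → ⊕c_λ → (⊕a_λ)[1]) is a distinguished triangle, where the connecting map is the composite of ⊕h_λ with the canonical isomorphism ⊕(a_λ[1]) ≅ (⊕a_λ)[1]. -/

import Mathlib

/-!
Complete `∐ aⱼ → ∐ bⱼ` to a distinguished triangle `T'`. Each `Tⱼ` maps to `T'` extending the
coproduct inclusions, and these maps assemble into a morphism from the coproduct triangle to `T'`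
which is the identity on the first two objects. Since `Hom(-, A)` turns coproducts into products
and a product of exact sequences is exact, `Hom(-, A)` is exact on the coproduct triangle at
`∐ cⱼ` and at `(∐ aⱼ)[1]`; the five-lemma chase then shows that the third component is
bijective on `Hom(-, A)` for every `A`, hence an isomorphism.
-/

open CategoryTheory CategoryTheory.Limits CategoryTheory.Pretriangulated Category

namespace CategoryTheory.Pretriangulated

variable {C : Type*} [Category C] [HasShift C ℤ]

noncomputable def isColimitShiftCofan {J : Type*} (X : J → C) [HasCoproduct X] (n : ℤ) :
    IsColimit (Cofan.mk ((∐ X)⟦n⟧) fun j => (Limits.Sigma.ι X j)⟦n⟧') :=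
  isColimitCofanMkObjOfIsColimit (shiftFunctor C n) X _ (coproductIsCoproduct X)

@[simp]
lemma shift_ι_comp_desc_isColimitShiftCofan {J : Type*} (X : J → C) [HasCoproduct X] (n : ℤ)
    {A : C} (f : ∀ j, (X j)⟦n⟧ ⟶ A) (j : J) :
    (Limits.Sigma.ι X j)⟦n⟧' ≫ Cofan.IsColimit.desc (isColimitShiftCofan X n) f = f j :=
  Cofan.IsColimit.fac (isColimitShiftCofan X n) f j

section coproductTriangle

variable {J : Type*} (T : J → Triangle C)
  [HasCoproduct fun j => (T j).obj₁] [HasCoproduct fun j => (T j).obj₂]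
  [HasCoproduct fun j => (T j).obj₃] [HasCoproduct fun j => (T j).obj₁⟦(1 : ℤ)⟧]

-- Reducible, so that `simp` and `rw` see the objects and maps as coproducts and `Sigma.map`s.
noncomputable abbrev coproductTriangle : Triangle C where
  obj₁ := ∐ fun j => (T j).obj₁
  obj₂ := ∐ fun j => (T j).obj₂
  obj₃ := ∐ fun j => (T j).obj₃
  mor₁ := Limits.Sigma.map fun j => (T j).mor₁
  mor₂ := Limits.Sigma.map fun j => (T j).mor₂
  mor₃ := (Limits.Sigma.map fun j => (T j).mor₃) ≫ sigmaComparison (shiftFunctor C (1 : ℤ)) _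

noncomputable def coproductTriangle.desc {T' : Triangle C} (φ : ∀ j, T j ⟶ T') :
    coproductTriangle T ⟶ T' where
  hom₁ := Limits.Sigma.desc fun j => (φ j).hom₁
  hom₂ := Limits.Sigma.desc fun j => (φ j).hom₂
  hom₃ := Limits.Sigma.desc fun j => (φ j).hom₃
  comm₁ := Limits.Sigma.hom_ext _ _ fun j => by simp
  comm₂ := Limits.Sigma.hom_ext _ _ fun j => by simp
  comm₃ := Limits.Sigma.hom_ext _ _ fun j => by simp

end coproductTriangle

-- Qualified because inside `Triangle.yoneda_exact₁` the name `shiftFunctor` would resolve to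
-- `Triangle.shiftFunctor`.
variable [HasZeroObject C] [Preadditive C] [∀ n : ℤ, (CategoryTheory.shiftFunctor C n).Additive]
  [Pretriangulated C]

lemma Triangle.yoneda_exact₁ (T : Triangle C) (hT : T ∈ distTriang C) {X : C}
    (f : T.obj₁⟦(1 : ℤ)⟧ ⟶ X) (hf : T.mor₃ ≫ f = 0) :
    ∃ g : T.obj₂⟦(1 : ℤ)⟧ ⟶ X, f = T.mor₁⟦1⟧' ≫ g := by
  obtain ⟨g, hg⟩ : ∃ g : T.obj₂⟦(1 : ℤ)⟧ ⟶ X, f = (-T.mor₁⟦1⟧') ≫ g :=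
    T.rotate.yoneda_exact₃ (rot_of_distTriang _ hT) f hf
  exact ⟨-g, by rw [hg, Preadditive.neg_comp, Preadditive.comp_neg]⟩

section coproductTriangle

variable {J : Type*} (T : J → Triangle C) (hT : ∀ j, T j ∈ distTriang C)
  [HasCoproduct fun j => (T j).obj₁] [HasCoproduct fun j => (T j).obj₂]
  [HasCoproduct fun j => (T j).obj₃] [HasCoproduct fun j => (T j).obj₁⟦(1 : ℤ)⟧]
include hT

lemma coproductTriangle.mor₁_comp_mor₂ :
    (coproductTriangle T).mor₁ ≫ (coproductTriangle T).mor₂ = 0 :=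
  Limits.Sigma.hom_ext _ _ fun j => by simp [reassoc_of% comp_distTriang_mor_zero₁₂ _ (hT j)]

lemma coproductTriangle.yoneda_exact₃ {A : C} (u : (coproductTriangle T).obj₃ ⟶ A)
    (hu : (coproductTriangle T).mor₂ ≫ u = 0) :
    ∃ β : (coproductTriangle T).obj₁⟦(1 : ℤ)⟧ ⟶ A, u = (coproductTriangle T).mor₃ ≫ β := by
  have hu' j : (T j).mor₂ ≫ Limits.Sigma.ι (fun j => (T j).obj₃) j ≫ u = 0 := by
    simpa using congr(Limits.Sigma.ι _ j ≫ $hu)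
  choose b hb using fun j => (T j).yoneda_exact₃ (hT j) _ (hu' j)
  refine ⟨Cofan.IsColimit.desc (isColimitShiftCofan _ 1) b, Limits.Sigma.hom_ext _ _ fun j => ?_⟩
  simp [hb j]

lemma coproductTriangle.yoneda_exact₁ {A : C} (g : (coproductTriangle T).obj₁⟦(1 : ℤ)⟧ ⟶ A)
    (hg : (coproductTriangle T).mor₃ ≫ g = 0) :
    ∃ β : (coproductTriangle T).obj₂⟦(1 : ℤ)⟧ ⟶ A, g = (coproductTriangle T).mor₁⟦1⟧' ≫ β := by
  have hg' j : (T j).mor₃ ≫ (Limits.Sigma.ι (fun j => (T j).obj₁) j)⟦(1 : ℤ)⟧' ≫ g = 0 := by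
    simpa using congr(Limits.Sigma.ι _ j ≫ $hg)
  choose α hα using fun j => (T j).yoneda_exact₁ (hT j) _ (hg' j)
  refine ⟨Cofan.IsColimit.desc (isColimitShiftCofan _ 1) α,
    Cofan.IsColimit.hom_ext (isColimitShiftCofan _ 1) _ _ fun j => ?_⟩
  simp only [cofan_mk_inj]
  rw [hα j, ← Functor.map_comp_assoc, Limits.Sigma.ι_map, Functor.map_comp_assoc,
    shift_ι_comp_desc_isColimitShiftCofan]

variable {T' : Triangle C} (hT' : T' ∈ distTriang C) (φ : coproductTriangle T ⟶ T')
  [IsIso φ.hom₁] [IsIso φ.hom₂]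
include hT'

lemma coproductTriangle.epi_hom₃ : Epi φ.hom₃ := by
  rw [Preadditive.epi_iff_cancel_zero]
  intro A f hf
  obtain ⟨g, rfl⟩ := T'.yoneda_exact₃ hT' f (by
    rw [← cancel_epi φ.hom₂, ← φ.comm₂_assoc, hf, comp_zero, comp_zero])
  obtain ⟨β, hβ⟩ := coproductTriangle.yoneda_exact₁ T hT (φ.hom₁⟦1⟧' ≫ g)
    (by rw [← assoc, φ.comm₃, assoc, hf])
  have hg : g = T'.mor₁⟦1⟧' ≫ (inv φ.hom₂)⟦1⟧' ≫ β := by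
    rw [← cancel_epi (φ.hom₁⟦1⟧'), hβ, ← Functor.map_comp_assoc, ← Functor.map_comp_assoc,
      ← φ.comm₁, assoc, IsIso.hom_inv_id, comp_id]
  rw [hg, reassoc_of% comp_distTriang_mor_zero₃₁ _ hT', zero_comp]

lemma coproductTriangle.exists_hom₃_comp_eq {A : C} (a : (coproductTriangle T).obj₃ ⟶ A) :
    ∃ x : T'.obj₃ ⟶ A, φ.hom₃ ≫ x = a := by
  obtain ⟨a', ha'⟩ := T'.yoneda_exact₂ hT' (inv φ.hom₂ ≫ (coproductTriangle T).mor₂ ≫ a) (by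
    rw [← cancel_epi φ.hom₁, comp_zero, ← φ.comm₁_assoc, IsIso.hom_inv_id_assoc,
      reassoc_of% coproductTriangle.mor₁_comp_mor₂ T hT, zero_comp])
  obtain ⟨β, hβ⟩ := coproductTriangle.yoneda_exact₃ T hT (a - φ.hom₃ ≫ a') (by
    rw [Preadditive.comp_sub, φ.comm₂_assoc, ← ha', IsIso.hom_inv_id_assoc, sub_self])
  refine ⟨a' + T'.mor₃ ≫ (inv φ.hom₁)⟦1⟧' ≫ β, ?_⟩
  rw [Preadditive.comp_add, ← assoc φ.hom₃, ← φ.comm₃, assoc, ← Functor.map_comp_assoc,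
    IsIso.hom_inv_id, Functor.map_id, id_comp, ← hβ, add_sub_cancel]

lemma coproductTriangle.isIso_hom₃ : IsIso φ.hom₃ := by
  have := coproductTriangle.epi_hom₃ T hT hT' φ
  exact isIso_of_coyoneda_map_bijective _ fun A =>
    ⟨fun _ _ h => (cancel_epi φ.hom₃).1 h, coproductTriangle.exists_hom₃_comp_eq T hT hT' φ⟩

omit hT'

lemma coproductTriangle_distinguished : coproductTriangle T ∈ distTriang C := by
  obtain ⟨Z, f₂, f₃, hT'⟩ := distinguished_cocone_triangle (coproductTriangle T).mor₁
  let φ := coproductTriangle.desc T fun j =>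
    completeDistinguishedTriangleMorphism _ _ (hT j) hT'
      (Limits.Sigma.ι (fun j => (T j).obj₁) j) (Limits.Sigma.ι (fun j => (T j).obj₂) j)
      (by exact (Limits.Sigma.ι_map (fun j => (T j).mor₁) j).symm)
  have h₁ : φ.hom₁ = 𝟙 _ :=
    Limits.Sigma.hom_ext _ _ fun j => (Limits.Sigma.ι_desc _ j).trans (comp_id _).symm
  have h₂ : φ.hom₂ = 𝟙 _ :=
    Limits.Sigma.hom_ext _ _ fun j => (Limits.Sigma.ι_desc _ j).trans (comp_id _).symm
  have : IsIso φ.hom₁ := by rw [h₁]; exact IsIso.id _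
  have : IsIso φ.hom₂ := by rw [h₂]; exact IsIso.id _
  have : IsIso φ := Triangle.isIso_of_isIsos φ inferInstance inferInstance
    (coproductTriangle.isIso_hom₃ T hT hT' φ)
  exact isomorphic_distinguished _ hT' _ (asIso φ)

end coproductTriangle

end CategoryTheory.Pretriangulated

/-- In a (pre)triangulated category, a small coproduct of distinguished triangles is a
distinguished triangle: given a family of distinguished triangles
`a_λ → b_λ → c_λ → a_λ[1]` such that the coproducts `⊕ a_λ`, `⊕ b_λ`, `⊕ c_λ` exist,
the triangle `⊕ a_λ → ⊕ b_λ → ⊕ c_λ → (⊕ a_λ)[1]`, whose connecting map is the composite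
of `⊕ h_λ` with the canonical map `⊕ (a_λ[1]) ⟶ (⊕ a_λ)[1]`, is distinguished. -/
theorem coproduct_of_distinguished_triangles_distinguished
    {C : Type*} [Category C] [HasZeroObject C] [Preadditive C] [HasShift C ℤ]
    [∀ n : ℤ, (shiftFunctor C n).Additive] [Pretriangulated C]
    {J : Type*} (T : J → Triangle C) (hT : ∀ j, T j ∈ distTriang C)
    [HasCoproduct fun j => (T j).obj₁] [HasCoproduct fun j => (T j).obj₂]
    [HasCoproduct fun j => (T j).obj₃] [HasCoproduct fun j => (T j).obj₁⟦(1 : ℤ)⟧] :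
    Triangle.mk (Limits.Sigma.map fun j => (T j).mor₁) (Limits.Sigma.map fun j => (T j).mor₂)
      ((Limits.Sigma.map fun j => (T j).mor₃) ≫
        sigmaComparison (shiftFunctor C (1 : ℤ)) fun j => (T j).obj₁) ∈
      distTriang C :=
  coproductTriangle_distinguished T hT
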